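/- Relation between shifted tadpole Nahm sums: for |q|<1, ∑_{i,j,k≥0} q^{i^2+j^2+(k^2-k)/2 - ij - jk - 2i + 2j} / ((q;q)_i (q;q)_j (q;q)_k) = 2q^{-1} ∑_{i,j,k≥0} q^{i^2+j^2+(k^2+k)/2 - ij - jk} / ((q;q)_i (q;q)_j (q;q)_k). -/

import Mathlib

/-!
Write `V(a,b,c)` for the tadpole sum with linear exponent `a i + b j + c k`. Splitting
`1 = q^{n+1} + (1 - q^{n+1})` and using `(q;q)_{n+1} = (q;q)_n (1 - q^{n+1})` in one summation
variable gives, after shifting that variable by one, a three-term recurrence: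
`V(a,b,c) = V(a+1,b,c) + q^{a+1} V(a+2,b-1,c)` for `i`, and similarly for `j` and `k`.
Nine instances of these recurrences combine linearly to `q V(-2,2,-1) = 2 V(0,0,0)`.
All sums converge absolutely because the quadratic form `i² + j² + k²/2 - ij - jk` is positive
definite and `|(q;q)_n|` is bounded away from zero.
-/

/-- Finite q-Pochhammer symbol `(a;q)_n`. -/
noncomputable def qPoch (a q : ℂ) (n : ℕ) : ℂ := ∏ k ∈ Finset.range n, (1 - a * q ^ k)

theorem tsum_eq_tsum_add_tsum_of_injective {α G : Type*} [AddCommGroup G] [TopologicalSpace G]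
    [IsTopologicalAddGroup G] [T2Space G] {f g h : α → G} (hf : Summable f) (hg : Summable g)
    {e : α → α} (he : Function.Injective e) (h_off : ∀ p ∉ Set.range e, f p = g p)
    (h_on : ∀ p, f (e p) = g (e p) + h p) : ∑' p, f p = ∑' p, g p + ∑' p, h p := by
  have hsupp : Function.support (f - g) ⊆ Set.range e := fun p hp => by
    by_contra hpe
    exact hp (sub_eq_zero.2 (h_off p hpe))
  rw [← sub_eq_iff_eq_add', ← hf.tsum_sub hg, ← Pi.sub_def, ← he.tsum_eq hsupp]
  exact tsum_congr fun p => by simp [h_on]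

theorem tsum_prod_prod {α β γ G : Type*} [NormedAddCommGroup G] [CompleteSpace G]
    {f : α × β × γ → G} (hf : Summable f) :
    ∑' p, f p = ∑' (a) (b) (c), f (a, b, c) := by
  rw [hf.tsum_prod]
  exact tsum_congr fun a => (hf.prod_factor a).tsum_prod

theorem Real.exp_neg_div_le_one_sub {t s : ℝ} (ht : 0 ≤ t) (hts : t ≤ s) (hs : s < 1) :
    Real.exp (-(t / (1 - s))) ≤ 1 - t := by
  have h1t : 0 < 1 - t := by linarith
  have key : (1 - t)⁻¹ ≤ Real.exp (t / (1 - s)) :=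
    calc (1 - t)⁻¹ = t / (1 - t) + 1 := by field_simp; ring
      _ ≤ t / (1 - s) + 1 := by gcongr
      _ ≤ _ := Real.add_one_le_exp _
  rw [Real.exp_neg]
  exact inv_le_of_inv_le₀ h1t key

section qPoch

open Finset

theorem qPoch_succ (q : ℂ) (n : ℕ) : qPoch q q (n + 1) = qPoch q q n * (1 - q * q ^ n) :=
  prod_range_succ _ n

variable {q : ℂ}

theorem one_sub_norm_pow_succ_le (m : ℕ) : 1 - ‖q‖ ^ (m + 1) ≤ ‖1 - q * q ^ m‖ := by
  simpa [← pow_succ'] using norm_sub_norm_le (1 : ℂ) (q ^ (m + 1))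

theorem one_sub_mul_pow_ne_zero (hq : ‖q‖ < 1) (m : ℕ) : 1 - q * q ^ m ≠ 0 := by
  rw [← norm_pos_iff]
  have : ‖q‖ ^ (m + 1) < 1 := pow_lt_one₀ (norm_nonneg q) hq m.succ_ne_zero
  linarith [one_sub_norm_pow_succ_le (q := q) m]

theorem inv_qPoch_succ (hq : ‖q‖ < 1) (n : ℕ) :
    (qPoch q q (n + 1))⁻¹ = q * q ^ n * (qPoch q q (n + 1))⁻¹ + (qPoch q q n)⁻¹ := by
  have := one_sub_mul_pow_ne_zero hq n
  rw [qPoch_succ, mul_inv]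
  field_simp
  ring

theorem exp_neg_le_norm_qPoch (hq : ‖q‖ < 1) (n : ℕ) :
    Real.exp (-(1 / (1 - ‖q‖) ^ 2)) ≤ ‖qPoch q q n‖ := by
  set x := ‖q‖
  have hx0 : 0 ≤ x := norm_nonneg q
  have hsum : ∑ m ∈ range n, x ^ (m + 1) / (1 - x) ≤ 1 / (1 - x) ^ 2 := by
    have h1x : 0 < 1 - x := by linarith
    rw [← sum_div, sq, ← div_div]
    gcongr
    calc ∑ m ∈ range n, x ^ (m + 1) ≤ ∑ m ∈ range n, x ^ m :=
          sum_le_sum fun m _ => pow_le_pow_of_le_one hx0 hq.le m.le_succ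
      _ ≤ 1 / (1 - x) := by
          simpa [← range_eq_Ico] using geom_sum_Ico_le_of_lt_one (m := 0) (n := n) hx0 hq
  calc Real.exp (-(1 / (1 - x) ^ 2))
      ≤ Real.exp (-∑ m ∈ range n, x ^ (m + 1) / (1 - x)) := by gcongr
    _ = ∏ m ∈ range n, Real.exp (-(x ^ (m + 1) / (1 - x))) := by
        rw [← sum_neg_distrib, Real.exp_sum]
    _ ≤ ∏ m ∈ range n, (1 - x ^ (m + 1)) := by
        gcongr with m
        exact Real.exp_neg_div_le_one_sub (by positivity)
          (pow_le_of_le_one hx0 hq.le m.succ_ne_zero) hq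
    _ ≤ ∏ m ∈ range n, ‖1 - q * q ^ m‖ := by
        gcongr with m
        · exact fun m _ => sub_nonneg.2 (pow_le_one₀ hx0 hq.le)
        · exact one_sub_norm_pow_succ_le m
    _ = ‖qPoch q q n‖ := by rw [qPoch, norm_prod]

end qPoch

namespace Tadpole

def exponent (a b c : ℤ) (i j k : ℕ) : ℤ :=
  (i : ℤ) ^ 2 + (j : ℤ) ^ 2 + ((k : ℤ) ^ 2 + (k : ℤ)) / 2 - (i : ℤ) * (j : ℤ) - (j : ℤ) * (k : ℤ)
    + a * i + b * j + c * k

noncomputable def term (q : ℂ) (a b c : ℤ) (p : ℕ × ℕ × ℕ) : ℂ :=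
  q ^ exponent a b c p.1 p.2.1 p.2.2 / (qPoch q q p.1 * qPoch q q p.2.1 * qPoch q q p.2.2)

noncomputable def sum (q : ℂ) (a b c : ℤ) : ℂ := ∑' p, term q a b c p

theorem two_mul_triangle (k : ℤ) : 2 * ((k ^ 2 + k) / 2) = k ^ 2 + k := by
  obtain ⟨r, hr⟩ := Int.even_mul_succ_self k
  rw [show k ^ 2 + k = r + r by rw [← hr]; ring]
  omega

theorem triangle_succ (k : ℤ) : ((k + 1) ^ 2 + (k + 1)) / 2 = (k ^ 2 + k) / 2 + (k + 1) := by
  rw [show (k + 1) ^ 2 + (k + 1) = k ^ 2 + k + (k + 1) * 2 by ring,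
    Int.add_mul_ediv_right _ _ two_ne_zero]

theorem triangle_sub (k : ℤ) : (k ^ 2 - k) / 2 = (k ^ 2 + k) / 2 - k := by
  rw [show k ^ 2 - k = k ^ 2 + k + (-k) * 2 by ring, Int.add_mul_ediv_right _ _ two_ne_zero]
  ring

theorem exists_sub_le_exponent (a b c : ℤ) :
    ∃ C : ℤ, ∀ i j k : ℕ, (i + j + k : ℤ) - C ≤ exponent a b c i j k := by
  -- the quadratic part `Q` satisfies `20 Q ≥ i² + j² + k²`, and `n² / 20 - M n ≥ -5 M²`
  set M := |a - 1| + |b - 1| + |c - 1|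
  refine ⟨15 * M ^ 2, fun i j k => ?_⟩
  have htri := two_mul_triangle k
  have hquad : (i ^ 2 + j ^ 2 + k ^ 2 : ℤ) ≤
      20 * (i ^ 2 + j ^ 2 + ((k ^ 2 + k) / 2 : ℤ) - i * j - j * k) := by
    nlinarith [sq_nonneg (9 * (k : ℤ) - 10 * j), sq_nonneg (19 * (i : ℤ) - 10 * j),
      sq_nonneg (j : ℤ), Int.natCast_nonneg k]
  have hlin : -(M * (i + j + k)) ≤ (a - 1) * i + (b - 1) * j + (c - 1) * k := by
    have hi : (0 : ℤ) ≤ i := by positivity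
    have hj : (0 : ℤ) ≤ j := by positivity
    have hk : (0 : ℤ) ≤ k := by positivity
    nlinarith [neg_abs_le (a - 1), neg_abs_le (b - 1), neg_abs_le (c - 1), abs_nonneg (a - 1),
      abs_nonneg (b - 1), abs_nonneg (c - 1)]
  unfold exponent
  nlinarith [sq_nonneg ((i : ℤ) - 10 * M), sq_nonneg ((j : ℤ) - 10 * M),
    sq_nonneg ((k : ℤ) - 10 * M)]

variable {q : ℂ} (hq0 : q ≠ 0) (hq : ‖q‖ < 1)
include hq0 hq

theorem summable_term (a b c : ℤ) : Summable (term q a b c) := by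
  obtain ⟨C, hC⟩ := exists_sub_le_exponent a b c
  set x := ‖q‖
  have hx0 : 0 < x := norm_pos_iff.2 hq0
  set r := Real.exp (-(1 / (1 - x) ^ 2))
  have hr : 0 < r := Real.exp_pos _
  have hgeom : Summable fun n : ℕ => x ^ n := summable_geometric_of_lt_one hx0.le hq
  have hmajorant : Summable fun p : ℕ × ℕ × ℕ =>
      x ^ (-C) / r ^ 3 * (x ^ p.1 * (x ^ p.2.1 * x ^ p.2.2)) :=
    (hgeom.mul_of_nonneg (hgeom.mul_of_nonneg hgeom (fun _ => by positivity) fun _ => by positivity)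
      (fun _ => by positivity) fun _ => by positivity).mul_left _
  refine hmajorant.of_norm_bounded fun ⟨i, j, k⟩ => ?_
  have hnum : ‖q ^ exponent a b c i j k‖ ≤ x ^ (-C) * (x ^ i * (x ^ j * x ^ k)) :=
    calc ‖q ^ exponent a b c i j k‖ = x ^ exponent a b c i j k := norm_zpow q _
      _ ≤ x ^ (-C + (i + (j + k))) :=
          zpow_le_zpow_right_of_le_one₀ hx0 hq.le (by linarith [hC i j k])
      _ = _ := by simp only [zpow_add₀ hx0.ne', zpow_natCast]
  have hden : r ^ 3 ≤ ‖qPoch q q i * qPoch q q j * qPoch q q k‖ := by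
    rw [norm_mul, norm_mul, pow_three, ← mul_assoc]
    gcongr <;> exact exp_neg_le_norm_qPoch hq _
  rw [term, norm_div, div_mul_eq_mul_div₀]
  exact div_le_div₀ (by positivity) hnum (by positivity) hden

theorem sum_eq_tsum (a b c : ℤ) :
    sum q a b c = ∑' (i : ℕ) (j : ℕ) (k : ℕ),
      q ^ exponent a b c i j k / (qPoch q q i * qPoch q q j * qPoch q q k) :=
  tsum_prod_prod (summable_term hq0 hq a b c)

theorem sum_eq_i (a b c : ℤ) :
    sum q a b c = sum q (a + 1) b c + q ^ (a + 1) * sum q (a + 2) (b - 1) c := by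
  rw [sum, sum, sum, ← tsum_mul_left]
  refine tsum_eq_tsum_add_tsum_of_injective (summable_term hq0 hq _ _ _)
    (summable_term hq0 hq _ _ _) (e := fun p => (p.1 + 1, p.2)) ?_ ?_ ?_
  · rintro ⟨i, j, k⟩ ⟨i', j', k'⟩ h
    simpa using h
  · rintro ⟨_ | i, j, k⟩ hp
    · simp only [term, exponent]; push_cast; ring_nf
    · exact absurd ⟨(i, j, k), rfl⟩ hp
  · rintro ⟨i, j, k⟩
    have hE : exponent a b c (i + 1) j k = (a + 1) + exponent (a + 2) (b - 1) c i j k := by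
      simp only [exponent]; push_cast; ring
    have hE' : exponent (a + 1) b c (i + 1) j k =
        (a + 1) + exponent (a + 2) (b - 1) c i j k + (i + 1 : ℕ) := by
      simp only [exponent]; push_cast; ring
    simp only [term]
    rw [hE, hE', zpow_add₀ hq0 _ (i + 1 : ℕ), zpow_add₀ hq0 (a + 1), zpow_natCast, pow_succ']
    linear_combination q ^ (a + 1) * q ^ exponent (a + 2) (b - 1) c i j k * (qPoch q q j)⁻¹ *
      (qPoch q q k)⁻¹ * inv_qPoch_succ hq i

theorem sum_eq_j (a b c : ℤ) :
    sum q a b c = sum q a (b + 1) c + q ^ (b + 1) * sum q (a - 1) (b + 2) (c - 1) := by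
  rw [sum, sum, sum, ← tsum_mul_left]
  refine tsum_eq_tsum_add_tsum_of_injective (summable_term hq0 hq _ _ _)
    (summable_term hq0 hq _ _ _) (e := fun p => (p.1, p.2.1 + 1, p.2.2)) ?_ ?_ ?_
  · rintro ⟨i, j, k⟩ ⟨i', j', k'⟩ h
    simpa using h
  · rintro ⟨i, _ | j, k⟩ hp
    · simp only [term, exponent]; push_cast; ring_nf
    · exact absurd ⟨(i, j, k), rfl⟩ hp
  · rintro ⟨i, j, k⟩
    have hE : exponent a b c i (j + 1) k = (b + 1) + exponent (a - 1) (b + 2) (c - 1) i j k := by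
      simp only [exponent]; push_cast; ring
    have hE' : exponent a (b + 1) c i (j + 1) k =
        (b + 1) + exponent (a - 1) (b + 2) (c - 1) i j k + (j + 1 : ℕ) := by
      simp only [exponent]; push_cast; ring
    simp only [term]
    rw [hE, hE', zpow_add₀ hq0 _ (j + 1 : ℕ), zpow_add₀ hq0 (b + 1), zpow_natCast, pow_succ']
    linear_combination q ^ (b + 1) * q ^ exponent (a - 1) (b + 2) (c - 1) i j k *
      (qPoch q q i)⁻¹ * (qPoch q q k)⁻¹ * inv_qPoch_succ hq j

theorem sum_eq_k (a b c : ℤ) :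
    sum q a b c = sum q a b (c + 1) + q ^ (c + 1) * sum q a (b - 1) (c + 1) := by
  rw [sum, sum, sum, ← tsum_mul_left]
  refine tsum_eq_tsum_add_tsum_of_injective (summable_term hq0 hq _ _ _)
    (summable_term hq0 hq _ _ _) (e := fun p => (p.1, p.2.1, p.2.2 + 1)) ?_ ?_ ?_
  · rintro ⟨i, j, k⟩ ⟨i', j', k'⟩ h
    simpa using h
  · rintro ⟨i, j, _ | k⟩ hp
    · simp only [term, exponent]; push_cast; ring_nf
    · exact absurd ⟨(i, j, k), rfl⟩ hp
  · rintro ⟨i, j, k⟩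
    have hE : exponent a b c i j (k + 1) = (c + 1) + exponent a (b - 1) (c + 1) i j k := by
      simp only [exponent]; push_cast; rw [triangle_succ]; ring
    have hE' : exponent a b (c + 1) i j (k + 1) =
        (c + 1) + exponent a (b - 1) (c + 1) i j k + (k + 1 : ℕ) := by
      simp only [exponent]; push_cast; rw [triangle_succ]; ring
    simp only [term]
    rw [hE, hE', zpow_add₀ hq0 _ (k + 1 : ℕ), zpow_add₀ hq0 (c + 1), zpow_natCast, pow_succ']
    linear_combination q ^ (c + 1) * q ^ exponent a (b - 1) (c + 1) i j k *
      (qPoch q q i)⁻¹ * (qPoch q q j)⁻¹ * inv_qPoch_succ hq k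

theorem mul_sum_neg_two_two_neg_one : q * sum q (-2) 2 (-1) = 2 * sum q 0 0 0 := by
  have e1 := sum_eq_k hq0 hq (-2) 2 (-1)
  have e2 := sum_eq_i hq0 hq (-2) 2 0
  have e3 := sum_eq_i hq0 hq (-2) 1 0
  have e4 := sum_eq_i hq0 hq (-1) 2 0
  have e5 := sum_eq_i hq0 hq (-1) 1 0
  have e6 := sum_eq_j hq0 hq 0 0 0
  have e7 := sum_eq_i hq0 hq (-1) 2 (-1)
  have e8 := sum_eq_k hq0 hq 0 2 (-1)
  have e9 := sum_eq_k hq0 hq 1 1 (-1)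
  norm_num at e1 e2 e3 e4 e5 e6 e7 e8 e9
  have e2' : q * sum q (-2) 2 0 = q * sum q (-1) 2 0 + sum q 0 1 0 := by
    rw [e2]; field_simp
  have e3' : q * sum q (-2) 1 0 = q * sum q (-1) 1 0 + sum q 0 0 0 := by
    rw [e3]; field_simp
  linear_combination q * e1 + e2' + e3' + q * e4 + q * e5 - e6 - q * e7 - q * e8 - q * e9

end Tadpole

open Tadpole in
/-- Relation `χ₀(q⁻²,q²,q^{-1/2};q) = 2 q⁻¹ χ₀(1,1,q^{1/2};q)` between shifted
    rank-3 tadpole Nahm sums. -/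
theorem nahm_relation_2 (q : ℂ) (hq0 : q ≠ 0) (hq : ‖q‖ < 1) :
    ∑' (i : ℕ) (j : ℕ) (k : ℕ),
        q ^ ((i : ℤ) ^ 2 + (j : ℤ) ^ 2 + ((k : ℤ) ^ 2 - (k : ℤ)) / 2
              - (i : ℤ) * (j : ℤ) - (j : ℤ) * (k : ℤ) - 2 * (i : ℤ) + 2 * (j : ℤ))
          / (qPoch q q i * qPoch q q j * qPoch q q k)
      = 2 * q⁻¹ * ∑' (i : ℕ) (j : ℕ) (k : ℕ),
            q ^ ((i : ℤ) ^ 2 + (j : ℤ) ^ 2 + ((k : ℤ) ^ 2 + (k : ℤ)) / 2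
                  - (i : ℤ) * (j : ℤ) - (j : ℤ) * (k : ℤ))
              / (qPoch q q i * qPoch q q j * qPoch q q k) := by
  have hL : ∀ i j k : ℕ, (i : ℤ) ^ 2 + (j : ℤ) ^ 2 + ((k : ℤ) ^ 2 - (k : ℤ)) / 2
      - (i : ℤ) * (j : ℤ) - (j : ℤ) * (k : ℤ) - 2 * (i : ℤ) + 2 * (j : ℤ) =
      exponent (-2) 2 (-1) i j k := fun i j k => by
    rw [exponent, triangle_sub]; ring
  have hR : ∀ i j k : ℕ, (i : ℤ) ^ 2 + (j : ℤ) ^ 2 + ((k : ℤ) ^ 2 + (k : ℤ)) / 2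
      - (i : ℤ) * (j : ℤ) - (j : ℤ) * (k : ℤ) = exponent 0 0 0 i j k := fun i j k => by
    rw [exponent]; ring
  simp only [hL, hR, ← sum_eq_tsum hq0 hq]
  field_simp
  linear_combination mul_sum_neg_two_two_neg_one hq0 hq
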